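/- For any n ≥ 2, the strong hub cover pebbling number of the book graph B_n = S_n □ P_2 equals 2n + 3. -/

import Mathlib

open SimpleGraph

/-- `U` is a strong hub set: nonempty, and any two vertices are joined by a path
whose internal vertices all lie in `U`. -/
def IsStrongHubSet {V : Type*} (G : SimpleGraph V) (U : Set V) : Prop :=
  U.Nonempty ∧ ∀ x y : V, ∃ p : G.Walk x y, p.IsPath ∧
    ∀ v ∈ p.support.tail.dropLast, v ∈ U

/-- `U` is a hub set: nonempty, and any two vertices outside `U` are joined by a path
whose internal vertices all lie in `U`. -/
def IsHubSet {V : Type*} (G : SimpleGraph V) (U : Set V) : Prop :=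
  U.Nonempty ∧ ∀ x y : V, x ∉ U → y ∉ U → ∃ p : G.Walk x y, p.IsPath ∧
    ∀ v ∈ p.support.tail.dropLast, v ∈ U

/-- A single pebbling move: remove two pebbles from `u`, add one to a neighbor `v`. -/
def PebblingMove {V : Type*} [DecidableEq V] (G : SimpleGraph V) (c c' : V → ℕ) : Prop :=
  ∃ u v : V, G.Adj u v ∧ 2 ≤ c u ∧
    c' = fun w => if w = u then c u - 2 else if w = v then c v + 1 else c w

/-- Reachability by a sequence of pebbling moves. -/
def PebblingReach {V : Type*} [DecidableEq V] (G : SimpleGraph V) : (V → ℕ) → (V → ℕ) → Prop :=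
  Relation.ReflTransGen (PebblingMove G)

/-- A configuration covers a set when every vertex of the set has a pebble. -/
def Covers {V : Type*} (c : V → ℕ) (U : Set V) : Prop := ∀ v ∈ U, 1 ≤ c v

/-- The star `S_n`: center `0` joined to the `n` leaves `1, …, n`. -/
def starGraph (n : ℕ) : SimpleGraph (Fin (n + 1)) where
  Adj x y := x ≠ y ∧ (x = 0 ∨ y = 0)
  symm := ⟨by tauto⟩
  loopless := ⟨by tauto⟩

/-- The book `B_n = S_n □ P_2`. -/
def bookGraph (n : ℕ) : SimpleGraph (Fin (n + 1) × Fin 2) :=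
  (starGraph n) □ (pathGraph 2)


variable {n : ℕ}

lemma book_adj {x y : Fin (n+1) × Fin 2} :
    (bookGraph n).Adj x y ↔
      (x.1 = y.1 ∧ x.2 ≠ y.2) ∨ ((x.1 ≠ y.1 ∧ (x.1 = 0 ∨ y.1 = 0)) ∧ x.2 = y.2) := by
  constructor
  · rintro (⟨⟨h1,h2⟩,h3⟩|⟨h1,h2⟩)
    · exact Or.inr ⟨⟨h1,h2⟩,h3⟩
    · rw [pathGraph_adj] at h1
      exact Or.inl ⟨h2, by omega⟩
  · rintro (⟨h1,h2⟩|⟨⟨h1,h2⟩,h3⟩)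
    · exact Or.inr ⟨by rw [pathGraph_adj]; omega, h1⟩
    · exact Or.inl ⟨⟨h1,h2⟩,h3⟩
section Reach
variable {V : Type*} [DecidableEq V] {G : SimpleGraph V} {c : V → ℕ}

lemma reach_refl (c : V → ℕ) : PebblingReach G c c := Relation.ReflTransGen.refl

lemma reach_trans {c₁ c₂ c₃ : V → ℕ} (h1 : PebblingReach G c₁ c₂)
    (h2 : PebblingReach G c₂ c₃) : PebblingReach G c₁ c₃ := h1.trans h2

lemma reach_move {z w : V} (h : G.Adj z w) (h2 : 2 ≤ c z) :
    PebblingReach G c (fun t => if t = z then c z - 2 else if t = w then c w + 1 else c t) :=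
  Relation.ReflTransGen.single ⟨z, w, h, h2, rfl⟩

lemma reach_congr {c₁ c₂ c₃ : V → ℕ} (h : PebblingReach G c₁ c₂) (he : c₂ = c₃) :
    PebblingReach G c₁ c₃ := he ▸ h

lemma reach_drain {z w : V} (h : G.Adj z w) (k : ℕ) (hk : 2 * k ≤ c z) :
    PebblingReach G c
      (fun t => if t = z then c z - 2 * k else if t = w then c w + k else c t) := by
  induction k with
  | zero =>
    apply reach_congr (reach_refl c)
    funext t
    by_cases h1 : t = z
    · subst h1; simp
    · by_cases h2 : t = w
      · subst h2; simp [h1]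
      · simp [h1, h2]
  | succ k ih =>
    have hzw : z ≠ w := h.ne
    have hk' : 2 * k ≤ c z := by omega
    refine reach_trans (ih hk') ?_
    have h2 : 2 ≤ (fun t => if t = z then c z - 2 * k else if t = w then c w + k else c t) z := by
      simp; omega
    refine reach_congr (reach_move h h2) ?_
    funext t
    by_cases h1 : t = z
    · subst h1; simp [hzw]; omega
    · by_cases h3 : t = w
      · subst h3; simp [h1, Ne.symm hzw]; omega
      · simp [h1, h3]
end Reach

section Collect
variable {n : ℕ} {c : Fin (n+1) × Fin 2 → ℕ}

lemma adj_vert (i : Fin (n+1)) (r : Fin 2) : (bookGraph n).Adj (i, r) (i, r + 1) := by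
  rw [book_adj]; left; refine ⟨rfl, ?_⟩; simp only []; fin_cases r <;> simp

lemma adj_horiz (i : Fin (n+1)) (r : Fin 2) (hi : i ≠ 0) : (bookGraph n).Adj (i, r) (0, r) := by
  rw [book_adj]; right; exact ⟨⟨by simpa using hi, Or.inr rfl⟩, rfl⟩

/-- Drain (half of) every column in `s`, row `r`, into the hub vertex `(0,r)`. -/
lemma reach_collect (r : Fin 2) (s : Finset (Fin (n+1))) (hs : (0 : Fin (n+1)) ∉ s) :
    PebblingReach (bookGraph n) c
      (fun t => if t = (0, r) then c (0, r) + ∑ i ∈ s, c (i, r) / 2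
        else if t.1 ∈ s ∧ t.2 = r then c t % 2 else c t) := by
  classical
  induction s using Finset.induction generalizing c with
  | empty =>
    apply reach_congr (reach_refl c)
    funext t
    by_cases h1 : t = (0, r) <;> simp [h1]
  | @insert i s hi ih =>
    have hi0 : i ≠ 0 := by rintro rfl; exact hs (Finset.mem_insert_self 0 s)
    have hs' : (0 : Fin (n+1)) ∉ s := fun h => hs (Finset.mem_insert_of_mem h)
    have hadj := adj_horiz i r hi0
    have hk : 2 * (c (i, r) / 2) ≤ c (i, r) := by omega
    refine reach_trans (reach_drain hadj (c (i, r) / 2) hk) ?_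
    set c₁ : Fin (n+1) × Fin 2 → ℕ := fun t =>
      if t = (i, r) then c (i, r) - 2 * (c (i, r) / 2)
      else if t = (0, r) then c (0, r) + c (i, r) / 2 else c t with hc₁
    refine reach_congr (ih hs') ?_
    funext t
    have hne : ((i : Fin (n+1)), (r : Fin 2)) ≠ ((0 : Fin (n+1)), r) := by
      simp [Prod.ext_iff]; exact hi0
    have hval : ∀ j ∈ s, c₁ (j, r) = c (j, r) := by
      intro j hj
      have hji : j ≠ i := by rintro rfl; exact hi hj
      have hj0 : j ≠ 0 := by rintro rfl; exact hs' hj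
      simp [hc₁, Prod.ext_iff, hji, hj0]
    by_cases h1 : t = (0, r)
    · subst h1
      simp only [if_pos rfl]
      rw [Finset.sum_congr rfl (fun j hj => by rw [hval j hj])]
      have h5 : c₁ (0, r) = c (0, r) + c (i, r) / 2 := by simp [hc₁, Ne.symm hne]
      rw [h5, Finset.sum_insert hi]
      simp
      ring
    · simp only [if_neg h1]
      by_cases h2 : t.1 ∈ insert i s ∧ t.2 = r
      · rw [if_pos h2]
        obtain ⟨h2a, h2b⟩ := h2
        rcases Finset.mem_insert.mp h2a with h3 | h3
        · have ht : t = (i, r) := by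
            rw [← h3, ← h2b]
          have h4 : ¬ (t.1 ∈ s ∧ t.2 = r) := by
            rw [ht]; simp [hi]
          rw [if_neg h4, ht]
          have h6 : c₁ (i, r) = c (i, r) - 2 * (c (i, r) / 2) := by simp [hc₁]
          rw [h6]
          omega
        · have h4 : t.1 ∈ s ∧ t.2 = r := ⟨h3, h2b⟩
          rw [if_pos h4]
          have hji : t ≠ (i, r) := by
            rintro rfl; exact hi h3
          have h6 : c₁ t = c t := by simp [hc₁, hji, h1]
          rw [h6]
      · have h3 : ¬ (t.1 ∈ s ∧ t.2 = r) := fun hx => h2 ⟨Finset.mem_insert_of_mem hx.1, hx.2⟩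
        have h4 : t ≠ (i, r) := by
          rintro rfl; exact h2 ⟨Finset.mem_insert_self i s, rfl⟩
        rw [if_neg h2, if_neg h3]
        simp [hc₁, h4, h1]
end Collect
section Hub
variable {W : Type*} {G : SimpleGraph W} {U : Set W}
open SimpleGraph.Walk

lemma hub_nil {x : W} (hU : U.Nonempty) :
    ∃ p : G.Walk x x, p.IsPath ∧ ∀ v ∈ p.support.tail.dropLast, v ∈ U :=
  ⟨Walk.nil, by simp, by simp⟩

lemma hub_path1 {x y : W} (h : G.Adj x y) :
    ∃ p : G.Walk x y, p.IsPath ∧ ∀ v ∈ p.support.tail.dropLast, v ∈ U :=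
  ⟨Walk.cons h Walk.nil, by simp [h.ne], by simp⟩

lemma hub_path2 {x w y : W} (h1 : G.Adj x w) (h2 : G.Adj w y) (hxy : x ≠ y) (hw : w ∈ U) :
    ∃ p : G.Walk x y, p.IsPath ∧ ∀ v ∈ p.support.tail.dropLast, v ∈ U :=
  ⟨Walk.cons h1 (Walk.cons h2 Walk.nil),
    by simp [Walk.isPath_def, h1.ne, h2.ne, hxy],
    by simp [hw]⟩

lemma hub_path3 {x w1 w2 y : W} (h1 : G.Adj x w1) (h2 : G.Adj w1 w2) (h3 : G.Adj w2 y)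
    (hxw2 : x ≠ w2) (hxy : x ≠ y) (hw1y : w1 ≠ y) (hw1 : w1 ∈ U) (hw2 : w2 ∈ U) :
    ∃ p : G.Walk x y, p.IsPath ∧ ∀ v ∈ p.support.tail.dropLast, v ∈ U :=
  ⟨Walk.cons h1 (Walk.cons h2 (Walk.cons h3 Walk.nil)),
    by simp [Walk.isPath_def, h1.ne, h2.ne, h3.ne, hxy, hxw2, hw1y],
    by simp [hw1, hw2]⟩

lemma hub_path4 {x w1 w2 w3 y : W} (h1 : G.Adj x w1) (h2 : G.Adj w1 w2) (h3 : G.Adj w2 w3)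
    (h4 : G.Adj w3 y) (hxw2 : x ≠ w2) (hxw3 : x ≠ w3) (hxy : x ≠ y)
    (hw1w3 : w1 ≠ w3) (hw1y : w1 ≠ y) (hw2y : w2 ≠ y)
    (hw1 : w1 ∈ U) (hw2 : w2 ∈ U) (hw3 : w3 ∈ U) :
    ∃ p : G.Walk x y, p.IsPath ∧ ∀ v ∈ p.support.tail.dropLast, v ∈ U :=
  ⟨Walk.cons h1 (Walk.cons h2 (Walk.cons h3 (Walk.cons h4 Walk.nil))),
    by simp [Walk.isPath_def, h1.ne, h2.ne, h3.ne, h4.ne, hxy, hxw2, hxw3, hw1w3, hw1y, hw2y],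
    by simp [hw1, hw2, hw3]⟩
end Hub
section HubSets
variable {n : ℕ}

lemma adj_vert2 (i : Fin (n+1)) {r s : Fin 2} (h : r ≠ s) : (bookGraph n).Adj (i, r) (i, s) := by
  rw [book_adj]; exact Or.inl ⟨rfl, h⟩

lemma adj_horiz2 {i : Fin (n+1)} (r : Fin 2) (hi : i ≠ 0) : (bookGraph n).Adj (0, r) (i, r) :=
  (adj_horiz i r hi).symm

lemma fin2_eq {a b c : Fin 2} (h1 : a ≠ c) (h2 : b ≠ c) : a = b := by omega

lemma pne1 {n : ℕ} {i j : Fin (n+1)} {e d : Fin 2} (h : i ≠ j) :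
    ((i,e) : Fin (n+1) × Fin 2) ≠ (j,d) := by simp [Prod.ext_iff]; tauto

lemma pne2 {n : ℕ} {i j : Fin (n+1)} {e d : Fin 2} (h : e ≠ d) :
    ((i,e) : Fin (n+1) × Fin 2) ≠ (j,d) := by simp [Prod.ext_iff]; tauto

/-- The "spine" `{a, b}` (as the full column 0) is a strong hub set. -/
lemma hub_col : IsStrongHubSet (bookGraph n) {z : Fin (n+1) × Fin 2 | z.1 = 0} := by
  constructor
  · exact ⟨(0,0), rfl⟩
  · rintro ⟨i, e⟩ ⟨j, d⟩
    by_cases hxy : ((i,e) : Fin (n+1) × Fin 2) = (j, d)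
    · rw [hxy]; exact hub_nil ⟨(0,0), rfl⟩
    · by_cases hi : i = 0 <;> by_cases hj : j = 0
      · subst hi; subst hj
        have hed : e ≠ d := by simpa [Prod.ext_iff] using hxy
        exact hub_path1 (adj_vert2 0 hed)
      · subst hi
        by_cases hed : e = d
        · subst hed; exact hub_path1 (adj_horiz2 e hj)
        · exact hub_path2 (adj_vert2 0 hed) (adj_horiz2 d hj) hxy rfl
      · subst hj
        by_cases hed : e = d
        · subst hed; exact hub_path1 (adj_horiz i e hi)
        · exact hub_path2 (adj_horiz i e hi) (adj_vert2 0 hed) hxy rfl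
      · by_cases hij : i = j
        · subst hij
          have hed : e ≠ d := by simpa [Prod.ext_iff] using hxy
          exact hub_path1 (adj_vert2 i hed)
        · by_cases hed : e = d
          · subst hed
            exact hub_path2 (adj_horiz i e hi) (adj_horiz2 e hj) hxy rfl
          · exact hub_path3 (adj_horiz i e hi) (adj_vert2 0 hed) (adj_horiz2 d hj)
              (pne1 hi) hxy (pne1 (fun h => hj h.symm)) rfl rfl

/-- Each full row (the star page side) is a strong hub set. -/
lemma hub_row (r : Fin 2) : IsStrongHubSet (bookGraph n) {z : Fin (n+1) × Fin 2 | z.2 = r} := by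
  constructor
  · exact ⟨(0,r), rfl⟩
  · rintro ⟨i, e⟩ ⟨j, d⟩
    by_cases hxy : ((i,e) : Fin (n+1) × Fin 2) = (j, d)
    · rw [hxy]; exact hub_nil ⟨(0,r), rfl⟩
    · by_cases he : e = r <;> by_cases hd : d = r
      · -- both in row r
        subst he
        rcases hd with rfl
        have hij : i ≠ j := by simpa [Prod.ext_iff] using hxy
        by_cases hi : i = 0
        · subst hi; exact hub_path1 (adj_horiz2 d (fun h => hij h.symm))
        · by_cases hj : j = 0
          · subst hj; exact hub_path1 (adj_horiz i d hi)
          · exact hub_path2 (adj_horiz i d hi) (adj_horiz2 d hj) hxy rfl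
      · -- e = r, d ≠ r
        subst he
        have hed : e ≠ d := fun h => hd h.symm
        by_cases hij : i = j
        · subst hij; exact hub_path1 (adj_vert2 i hed)
        · by_cases hi : i = 0
          · subst hi
            have hj : j ≠ 0 := fun h => hij h.symm
            exact hub_path2 (adj_horiz2 e hj) (adj_vert2 j hed) hxy rfl
          · by_cases hj : j = 0
            · subst hj
              exact hub_path2 (adj_horiz i e hi) (adj_vert2 0 hed) hxy rfl
            · exact hub_path3 (adj_horiz i e hi) (adj_horiz2 e hj) (adj_vert2 j hed)
                (pne1 hij) hxy (pne1 (fun h => hj h.symm)) rfl rfl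
      · -- e ≠ r, d = r
        subst hd
        have hed : e ≠ d := he
        by_cases hij : i = j
        · subst hij; exact hub_path1 (adj_vert2 i hed)
        · by_cases hj : j = 0
          · subst hj
            by_cases hi : i = 0
            · subst hi; exact hub_path1 (adj_vert2 0 hed)
            · exact hub_path2 (adj_vert2 i hed) (adj_horiz i d hi) hxy rfl
          · by_cases hi : i = 0
            · subst hi
              exact hub_path2 (adj_vert2 0 hed) (adj_horiz2 d hj) hxy rfl
            · exact hub_path3 (adj_vert2 i hed) (adj_horiz i d hi) (adj_horiz2 d hj)
                (pne1 hi) hxy (pne1 hij) rfl rfl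
      · -- both off row r
        have hed : e = d := fin2_eq he hd
        rcases hed with rfl
        have hij : i ≠ j := by simpa [Prod.ext_iff] using hxy
        by_cases hi : i = 0
        · subst hi
          have hj : j ≠ 0 := fun h => hij h.symm
          exact hub_path3 (adj_vert2 0 he) (adj_horiz2 r hj) (adj_vert2 j (Ne.symm he))
            (pne1 (fun h => hj h.symm)) hxy (pne1 (fun h => hj h.symm)) rfl rfl
        · by_cases hj : j = 0
          · subst hj
            exact hub_path3 (adj_vert2 i he) (adj_horiz i r hi) (adj_vert2 0 (Ne.symm he))
              (pne1 hi) hxy (pne1 hi) rfl rfl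
          · exact hub_path4 (adj_vert2 i he) (adj_horiz i r hi) (adj_horiz2 r hj)
              (adj_vert2 j (Ne.symm he)) (pne1 hi) (pne1 hij) hxy (pne1 hij) (pne1 hij)
              (pne1 (fun h => hj h.symm)) rfl rfl rfl
end HubSets
section Invariant
variable {n : ℕ}

/-- Column weight for the lower-bound invariant. -/
def wcol (k x y : ℕ) : ℕ :=
  if k = 0 then x + 2*y else if k = 1 then x/2 + y else if k = 2 then 2*x + 2*(y-1)
  else 2*(x-1) + 2*(y-1)

/-- Lower-bound potential. -/
def K3 (n : ℕ) (c : Fin (n+1) × Fin 2 → ℕ) : ℕ :=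
  ∑ i : Fin (n+1), wcol i.val (c (i, 0)) (c (i, 1))

lemma wcol_vert_01 (k x y : ℕ) (h : 2 ≤ x) : wcol k (x-2) (y+1) ≤ wcol k x y := by
  unfold wcol; split_ifs <;> omega

lemma wcol_vert_10 (k x y : ℕ) (h : 2 ≤ y) : wcol k (x+1) (y-2) ≤ wcol k x y := by
  unfold wcol; split_ifs <;> omega

lemma wcol_h_in0 (k p q x y : ℕ) (hk : k ≠ 0) (h : 2 ≤ x) :
    wcol 0 (p+1) q + wcol k (x-2) y ≤ wcol 0 p q + wcol k x y := by
  unfold wcol; split_ifs <;> omega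

lemma wcol_h_out0 (k p q x y : ℕ) (hk : k ≠ 0) (h : 2 ≤ p) :
    wcol 0 (p-2) q + wcol k (x+1) y ≤ wcol 0 p q + wcol k x y := by
  unfold wcol; split_ifs <;> omega

lemma wcol_h_in1 (k p q x y : ℕ) (hk : k ≠ 0) (h : 2 ≤ y) :
    wcol 0 p (q+1) + wcol k x (y-2) ≤ wcol 0 p q + wcol k x y := by
  unfold wcol; split_ifs <;> omega

lemma wcol_h_out1 (k p q x y : ℕ) (hk : k ≠ 0) (h : 2 ≤ q) :
    wcol 0 p (q-2) + wcol k x (y+1) ≤ wcol 0 p q + wcol k x y := by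
  unfold wcol; split_ifs <;> omega

lemma K3_move {c c' : Fin (n+1) × Fin 2 → ℕ} (h : PebblingMove (bookGraph n) c c') :
    K3 n c' ≤ K3 n c := by
  classical
  obtain ⟨u, v, hadj, h2, rfl⟩ := h
  have huv : u ≠ v := hadj.ne
  obtain ⟨u1, u2⟩ := u
  obtain ⟨v1, v2⟩ := v
  rcases book_adj.mp hadj with ⟨hcol, hrow⟩ | ⟨⟨hne1, h0⟩, hrow⟩
  · -- vertical move inside column u1
    simp only at hcol hrow
    subst hcol
    unfold K3
    rw [← Finset.add_sum_erase _ _ (Finset.mem_univ u1),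
        ← Finset.add_sum_erase _ _ (Finset.mem_univ u1)]
    have hrest : ∀ i ∈ Finset.univ.erase u1, ∀ r : Fin 2,
        (fun w => if w = (u1, u2) then c (u1, u2) - 2
          else if w = (u1, v2) then c (u1, v2) + 1 else c w) (i, r) = c (i, r) := by
      intro i hi r
      have hi' := Finset.ne_of_mem_erase hi
      simp [Prod.ext_iff, hi']
    rw [Finset.sum_congr rfl (fun i hi => by rw [hrest i hi 0, hrest i hi 1])]
    apply Nat.add_le_add_right
    have hu2 : u2 = 0 ∧ v2 = 1 ∨ u2 = 1 ∧ v2 = 0 := by omega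
    rcases hu2 with ⟨rfl, rfl⟩ | ⟨rfl, rfl⟩
    · have e1 : ((u1, (1:Fin 2)) : Fin (n+1) × Fin 2) ≠ (u1, 0) := by simp
      simp only [if_pos rfl, if_neg e1]
      exact wcol_vert_01 _ _ _ h2
    · have e1 : ((u1, (0:Fin 2)) : Fin (n+1) × Fin 2) ≠ (u1, 1) := by simp
      simp only [if_pos rfl, if_neg e1]
      exact wcol_vert_10 _ _ _ h2
  · -- horizontal move between columns u1 and v1
    simp only at hne1 h0 hrow
    subst hrow
    set c' : Fin (n+1) × Fin 2 → ℕ := fun w => if w = (u1, u2) then c (u1, u2) - 2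
      else if w = (v1, u2) then c (v1, u2) + 1 else c w with hc'
    have hvu : v1 ≠ u1 := Ne.symm hne1
    unfold K3
    have hsub : ({u1, v1} : Finset (Fin (n+1))) ⊆ Finset.univ := Finset.subset_univ _
    rw [← Finset.sum_sdiff hsub, ← Finset.sum_sdiff hsub]
    have hrest : ∀ i ∈ Finset.univ \ {u1, v1}, ∀ r : Fin 2, c' (i, r) = c (i, r) := by
      intro i hi r
      have hi' : i ≠ u1 ∧ i ≠ v1 := by
        simp only [Finset.mem_sdiff, Finset.mem_insert, Finset.mem_singleton] at hi
        tauto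
      simp [hc', Prod.ext_iff, hi'.1, hi'.2]
    rw [Finset.sum_congr rfl (fun i hi => by rw [hrest i hi 0, hrest i hi 1])]
    apply Nat.add_le_add_left
    rw [Finset.sum_pair hne1, Finset.sum_pair hne1]
    have e2 : c' (u1, u2) = c (u1, u2) - 2 := by simp [hc']
    have e3 : c' (v1, u2) = c (v1, u2) + 1 := by simp [hc', Prod.ext_iff, hvu]
    have hu2 : u2 = 0 ∨ u2 = 1 := by omega
    rcases h0 with rfl | rfl
    · -- u1 = 0 : hub sends out
      have hv0 : v1.val ≠ 0 := fun h => hne1 (Fin.ext (by simp [h])).symm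
      rcases hu2 with rfl | rfl
      · have e4 : c' (0, 1) = c (0, 1) := by
          rw [hc']
          simp only []
          rw [if_neg (by simp [Prod.ext_iff]), if_neg (by simp [Prod.ext_iff, Ne.symm hvu])]
        have e5 : c' (v1, 1) = c (v1, 1) := by
          rw [hc']
          simp only []
          rw [if_neg (by simp [Prod.ext_iff, hvu]), if_neg (by simp [Prod.ext_iff])]
        rw [e2, e3, e4, e5, Fin.val_zero]
        exact wcol_h_out0 v1.val _ _ _ _ hv0 h2
      · have e4 : c' (0, 0) = c (0, 0) := by
          simp [hc', Prod.ext_iff]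
        have e5 : c' (v1, 0) = c (v1, 0) := by
          simp [hc', Prod.ext_iff, hvu]
        rw [e2, e3, e4, e5, Fin.val_zero]
        exact wcol_h_out1 v1.val _ _ _ _ hv0 h2
    · -- v1 = 0 : leaf sends into hub
      have hu0 : u1.val ≠ 0 := fun h => hne1 (Fin.ext (by simp [h]))
      rcases hu2 with rfl | rfl
      · have e4 : c' (0, 1) = c (0, 1) := by
          simp [hc', Prod.ext_iff, hu0, Ne.symm hne1]
        have e5 : c' (u1, 1) = c (u1, 1) := by
          simp [hc', Prod.ext_iff, hne1]
        rw [e2, e3, e4, e5, Fin.val_zero]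
        have h' := wcol_h_in0 u1.val (c (0,0)) (c (0,1)) (c (u1,0)) (c (u1,1)) hu0 h2
        omega
      · have e4 : c' (0, 0) = c (0, 0) := by
          simp [hc', Prod.ext_iff, hu0, Ne.symm hne1]
        have e5 : c' (u1, 0) = c (u1, 0) := by
          simp [hc', Prod.ext_iff, hne1]
        rw [e2, e3, e4, e5, Fin.val_zero]
        have h' := wcol_h_in1 u1.val (c (0,0)) (c (0,1)) (c (u1,0)) (c (u1,1)) hu0 h2
        omega

lemma K3_reach {c c' : Fin (n+1) × Fin 2 → ℕ} (h : PebblingReach (bookGraph n) c c') :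
    K3 n c' ≤ K3 n c := by
  induction h with
  | refl => exact le_refl _
  | tail _ hstep ih => exact le_trans (K3_move hstep) ih

end Invariant
section Classify
variable {n : ℕ}

lemma fin2_succ_ne {a b : Fin 2} (h : a ≠ b) : a = b + 1 := by
  revert a b; decide

lemma fin2_pred_ne {a b : Fin 2} (h : a ≠ b + 1) : a = b := by
  revert a b; decide

lemma fin2_add_one_ne (b : Fin 2) : b + 1 ≠ b := by revert b; decide

lemma hub_classify (hn : 2 ≤ n) {U : Set (Fin (n+1) × Fin 2)}
    (hU : IsStrongHubSet (bookGraph n) U) {r : Fin 2} (ha : ((0:Fin (n+1)), r) ∉ U) :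
    ((0:Fin (n+1)), r+1) ∈ U ∧ ∀ i : Fin (n+1), i ≠ 0 → (i, r+1) ∈ U := by
  obtain ⟨hne, hpath⟩ := hU
  have step : ∀ i j : Fin (n+1), i ≠ 0 → j ≠ 0 → i ≠ j →
      (i, r+1) ∈ U ∧ ((0:Fin (n+1)), r+1) ∈ U := by
    intro i j hi hj hij
    obtain ⟨p, hp, hint⟩ := hpath (i, r) (j, r)
    cases p with
    | nil => exact absurd rfl hij
    | @cons _ w _ h q =>
      -- w is the first vertex after (i, r)
      have hw : w = (i, r+1) ∨ w = (0, r) := by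
        rcases book_adj.mp h with ⟨h1, h2⟩ | ⟨⟨h1, h2⟩, h3⟩
        · left
          have := fin2_succ_ne (Ne.symm h2)
          exact Prod.ext h1.symm this
        · right
          rcases h2 with h2 | h2
          · exact absurd h2 hi
          · exact Prod.ext h2 h3.symm
      cases q with
      | nil => -- then w = (j, r), i.e. (i,r) adjacent (j,r): impossible
        rcases book_adj.mp h with ⟨h1, h2⟩ | ⟨⟨h1, h2⟩, h3⟩
        · exact absurd rfl h2
        · rcases h2 with h2 | h2
          · exact absurd h2 hi
          · exact absurd h2 hj
      | @cons _ w2 _ h2 q2 =>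
        have hwmem : w ∈ U := by
          apply hint
          simp only [SimpleGraph.Walk.support_cons, List.tail_cons]
          rw [SimpleGraph.Walk.support_eq_cons q2, List.dropLast_cons₂]
          exact List.mem_cons_self
        have hwv : w = (i, r+1) := by
          rcases hw with hw | hw
          · exact hw
          · rw [hw] at hwmem; exact absurd hwmem ha
        subst hwv
        refine ⟨hwmem, ?_⟩
        -- now analyze w2
        have hw2 : w2 = (i, r) ∨ w2 = (0, r+1) := by
          rcases book_adj.mp h2 with ⟨h1, h4⟩ | ⟨⟨h1, h4⟩, h5⟩
          · left
            exact Prod.ext h1.symm (fin2_pred_ne (Ne.symm h4))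
          · right
            rcases h4 with h4 | h4
            · exact absurd h4 hi
            · exact Prod.ext h4 h5.symm
        rcases hw2 with hw2 | hw2
        · -- contradiction with path property
          exfalso
          rw [SimpleGraph.Walk.isPath_def] at hp
          subst hw2
          simp only [SimpleGraph.Walk.support_cons] at hp
          rw [SimpleGraph.Walk.support_eq_cons q2] at hp
          simp [List.nodup_cons] at hp
        · cases q2 with
          | nil =>
            -- w2 = (j, r), but w2 = (0, r+1): rows differ
            exfalso
            have h5 : (r : Fin 2) = r + 1 := congrArg Prod.snd hw2
            exact fin2_add_one_ne r h5.symm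
          | @cons _ w3 _ h3 q3 =>
            rw [← hw2]
            apply hint
            simp only [SimpleGraph.Walk.support_cons, List.tail_cons]
            rw [SimpleGraph.Walk.support_eq_cons q3, List.dropLast_cons₂, List.dropLast_cons₂]
            exact List.mem_cons_of_mem _ List.mem_cons_self
  have h12 : (⟨1, by omega⟩ : Fin (n+1)) ≠ ⟨2, by omega⟩ := by simp [Fin.ext_iff]
  have h10 : (⟨1, by omega⟩ : Fin (n+1)) ≠ 0 := by simp [Fin.ext_iff]
  have h20 : (⟨2, by omega⟩ : Fin (n+1)) ≠ 0 := by simp [Fin.ext_iff]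
  constructor
  · exact (step _ _ h10 h20 h12).2
  · intro i hi
    by_cases h1 : i = ⟨1, by omega⟩
    · subst h1
      exact (step _ _ hi h20 h12).1
    · exact (step i _ hi h10 h1).1
end Classify
section Lower
variable {n : ℕ}

/-- The extremal bad configuration: 5 pebbles on `u₁`, one on `v₂`,
one on each `uᵢ, vᵢ` for `i ≥ 3`. -/
def Fbad (n : ℕ) : Fin (n+1) × Fin 2 → ℕ := fun z =>
  if z.1.val = 1 then (if z.2.val = 0 then 5 else 0)
  else if z.1.val = 0 then 0
  else if z.1.val = 2 then (if z.2.val = 0 then 0 else 1)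
  else 1

lemma K3_mono {c d : Fin (n+1) × Fin 2 → ℕ} (h : ∀ v, c v ≤ d v) : K3 n c ≤ K3 n d := by
  apply Finset.sum_le_sum
  intro i _
  have h1 := h (i, 0); have h2 := h (i, 1)
  unfold wcol; split_ifs <;> omega

lemma K3_Fbad (hn : 2 ≤ n) : K3 n (Fbad n) = 2 := by
  unfold K3
  have hterm : ∀ i : Fin (n+1),
      wcol i.val (Fbad n (i, 0)) (Fbad n (i, 1)) =
        if i = (⟨1, by omega⟩ : Fin (n+1)) then 2 else 0 := by
    intro i
    by_cases h1 : i.val = 1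
    · have h2 : i = (⟨1, by omega⟩ : Fin (n+1)) := Fin.ext h1
      rw [if_pos h2, h2]
      simp [Fbad, wcol]
    · have hne : i ≠ (⟨1, by omega⟩ : Fin (n+1)) := fun h => h1 (by rw [h])
      rw [if_neg hne]
      by_cases h0 : i.val = 0
      · simp [Fbad, wcol, h0, h1]
      · by_cases h2 : i.val = 2
        · simp [Fbad, wcol, h2, h1, h0]
        · simp [Fbad, wcol, h0, h1, h2]
  rw [Finset.sum_congr rfl (fun i _ => hterm i)]
  rw [Finset.sum_ite_eq' Finset.univ _ (fun _ => 2)]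
  simp

lemma sum_Fbad (hn : 2 ≤ n) : ∑ v, Fbad n v = 2 * n + 2 := by
  rw [Fintype.sum_prod_type]
  have hterm : ∀ i : Fin (n+1), ∑ r : Fin 2, Fbad n (i, r) =
      if i.val = 0 then 0 else if i.val = 1 then 5 else if i.val = 2 then 1 else 2 := by
    intro i
    rw [Fin.sum_univ_two]
    by_cases h0 : i.val = 0 <;> by_cases h1 : i.val = 1 <;> by_cases h2 : i.val = 2 <;>
      simp [Fbad, h0, h1, h2] <;> omega
  rw [Finset.sum_congr rfl (fun i _ => hterm i)]
  have m0 : (0 : Fin (n+1)) ∈ Finset.univ := Finset.mem_univ _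
  have h10 : (⟨1, by omega⟩ : Fin (n+1)) ≠ 0 := by simp [Fin.ext_iff]
  have h20 : (⟨2, by omega⟩ : Fin (n+1)) ≠ 0 := by simp [Fin.ext_iff]
  have h21 : (⟨2, by omega⟩ : Fin (n+1)) ≠ ⟨1, by omega⟩ := by simp [Fin.ext_iff]
  have m1 : (⟨1, by omega⟩ : Fin (n+1)) ∈ Finset.univ.erase 0 :=
    Finset.mem_erase.mpr ⟨h10, Finset.mem_univ _⟩
  have m2 : (⟨2, by omega⟩ : Fin (n+1)) ∈ (Finset.univ.erase 0).erase ⟨1, by omega⟩ :=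
    Finset.mem_erase.mpr ⟨h21, Finset.mem_erase.mpr ⟨h20, Finset.mem_univ _⟩⟩
  rw [← Finset.add_sum_erase _ _ m0, ← Finset.add_sum_erase _ _ m1, ← Finset.add_sum_erase _ _ m2]
  have hrest : ∑ i ∈ ((((Finset.univ : Finset (Fin (n+1))).erase 0).erase ⟨1, by omega⟩).erase ⟨2, by omega⟩),
      (if i.val = 0 then 0 else if i.val = 1 then 5 else if i.val = 2 then 1 else 2) =
      ∑ _i ∈ ((((Finset.univ : Finset (Fin (n+1))).erase 0).erase ⟨1, by omega⟩).erase ⟨2, by omega⟩), (2:ℕ) := by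
    apply Finset.sum_congr rfl
    intro i hi
    have hi2 := Finset.ne_of_mem_erase hi
    have hi1 := Finset.ne_of_mem_erase (Finset.mem_of_mem_erase hi)
    have hi0 := Finset.ne_of_mem_erase (Finset.mem_of_mem_erase (Finset.mem_of_mem_erase hi))
    have v0 : ¬ i.val = 0 := fun h => hi0 (Fin.ext (by simpa using h))
    have v1 : ¬ i.val = 1 := fun h => hi1 (Fin.ext (by simpa using h))
    have v2 : ¬ i.val = 2 := fun h => hi2 (Fin.ext (by simpa using h))
    simp [v0, v1, v2]
  rw [hrest, Finset.sum_const, smul_eq_mul]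
  have hcard : ((((Finset.univ : Finset (Fin (n+1))).erase 0).erase ⟨1, by omega⟩).erase ⟨2, by omega⟩).card
      = n - 2 := by
    rw [Finset.card_erase_of_mem m2, Finset.card_erase_of_mem m1, Finset.card_erase_of_mem m0]
    simp
    omega
  rw [hcard]
  simp
  omega

lemma sub_config {V : Type*} [Fintype V] (F : V → ℕ) :
    ∀ t3, t3 ≤ ∑ v, F v → ∃ c : V → ℕ, (∀ v, c v ≤ F v) ∧ ∑ v, c v = t3 := by
  classical
  intro t3 ht
  obtain ⟨d, hd⟩ : ∃ d, ∑ v, F v - t3 = d := ⟨_, rfl⟩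
  induction d generalizing t3 with
  | zero =>
    exact ⟨F, fun v => le_refl _, by omega⟩
  | succ d ih =>
    obtain ⟨c, hc1, hc2⟩ := ih (t3 + 1) (by omega) (by omega)
    have hpos : 0 < ∑ v, c v := by omega
    obtain ⟨v0, hv0⟩ : ∃ v0, 0 < c v0 := by
      by_contra h
      push_neg at h
      have : ∑ v, c v = 0 := Finset.sum_eq_zero (fun v _ => by have := h v; omega)
      omega
    refine ⟨Function.update c v0 (c v0 - 1), ?_, ?_⟩
    · intro v
      by_cases hv : v = v0
      · subst hv; simp [Function.update]; have := hc1 v; omega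
      · simp [Function.update, hv]; exact hc1 v
    · rw [Finset.sum_update_of_mem (Finset.mem_univ v0), Finset.sdiff_singleton_eq_erase]
      rw [← Finset.add_sum_erase _ c (Finset.mem_univ v0)] at hc2
      omega

lemma covers_K3 (hn : 2 ≤ n) {U : Set (Fin (n+1) × Fin 2)} {c : Fin (n+1) × Fin 2 → ℕ}
    (hU : IsStrongHubSet (bookGraph n) U) (hc : Covers c U) : 3 ≤ K3 n c := by
  classical
  have pairle : ∀ k : Fin (n+1), k ≠ 0 →
      wcol 0 (c (0,0)) (c (0,1)) + wcol k.val (c (k,0)) (c (k,1)) ≤ K3 n c := by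
    intro k hk
    have hsub : ({(0 : Fin (n+1)), k} : Finset (Fin (n+1))) ⊆ Finset.univ := Finset.subset_univ _
    have := Finset.sum_le_sum_of_subset (f := fun i => wcol i.val (c (i,0)) (c (i,1))) hsub
    rw [Finset.sum_pair (Ne.symm hk)] at this
    simpa [K3] using this
  by_cases ha : ((0:Fin (n+1)), (0:Fin 2)) ∈ U
  · by_cases hb : ((0:Fin (n+1)), (1:Fin 2)) ∈ U
    · -- both a and b in U
      have h1 := hc _ ha
      have h2 := hc _ hb
      have hle : wcol 0 (c (0,0)) (c (0,1)) ≤ K3 n c :=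
        Finset.single_le_sum (f := fun i => wcol i.val (c (i,0)) (c (i,1)))
          (fun _ _ => Nat.zero_le _) (Finset.mem_univ 0)
      unfold wcol at hle
      simp only [Fin.val_zero, reduceIte] at hle
      omega
    · -- b ∉ U : row 0 ⊆ U
      obtain ⟨hb0, hball⟩ := hub_classify hn ⟨⟨_, ha⟩, hU.2⟩ (r := 1) hb
      have e1 : (1 : Fin 2) + 1 = 0 := by decide
      rw [e1] at hb0 hball
      have h1 := hc _ hb0
      have h20 : (⟨2, by omega⟩ : Fin (n+1)) ≠ 0 := by simp [Fin.ext_iff]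
      have h2 := hc _ (hball ⟨2, by omega⟩ h20)
      have := pairle ⟨2, by omega⟩ h20
      unfold wcol at this
      norm_num [Fin.val_zero, Fin.val_mk] at this
      simp only [Prod.mk_zero_zero] at h1 h2
      have h1' : 1 ≤ c (0,0) := h1
      omega
  · -- a ∉ U : row 1 ⊆ U
    obtain ⟨hb0, hball⟩ := hub_classify hn ⟨hU.1, hU.2⟩ (r := 0) ha
    have e1 : (0 : Fin 2) + 1 = 1 := by decide
    rw [e1] at hb0 hball
    have h1 := hc _ hb0
    have h10 : (⟨1, by omega⟩ : Fin (n+1)) ≠ 0 := by simp [Fin.ext_iff]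
    have h2 := hc _ (hball ⟨1, by omega⟩ h10)
    have := pairle ⟨1, by omega⟩ h10
    unfold wcol at this
    norm_num [Fin.val_zero, Fin.val_mk] at this
    omega
end Lower
section Count
variable {ι : Type*} [DecidableEq ι]

lemma exists_two_le {s : Finset ι} {x : ι → ℕ} (h : 0 < ∑ i ∈ s, x i / 2) :
    ∃ j ∈ s, 2 ≤ x j := by
  by_contra hc
  push_neg at hc
  have : ∑ i ∈ s, x i / 2 = 0 := Finset.sum_eq_zero (fun i hi => by have := hc i hi; omega)
  omega

lemma count_lemma (P : Finset ι) (p q : ℕ) (x y : ι → ℕ)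
    (hB : q + ∑ i ∈ P, y i / 2 = 0)
    (hA : p + ∑ i ∈ P, x i / 2 ≤ 2)
    (h4 : ∀ i ∈ P, ¬(2 ≤ x i ∧ 1 ≤ y i ∧ 2 ≤ p + ∑ j ∈ P, x j / 2))
    (h5 : ¬(1 ≤ p ∧ ∀ i ∈ P, 1 ≤ x i))
    (h6 : ¬((∀ i ∈ P, 1 ≤ x i) ∧ ∃ k ∈ P, 3 ≤ x k)) :
    p + q + ∑ i ∈ P, (x i + y i) ≤ 2 * P.card + 2 := by
  have hq : q = 0 := by omega
  have hy : ∀ i ∈ P, y i ≤ 1 := by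
    intro i hi
    have h0 : ∑ i ∈ P, y i / 2 = 0 := by omega
    have := Finset.sum_eq_zero_iff.mp h0 i hi
    omega
  have key : ∀ s : Finset ι, s ⊆ P →
      ∑ i ∈ s, (x i + y i) ≤ 2 * (∑ i ∈ s, x i / 2) + 2 * s.card := by
    intro s hs
    calc ∑ i ∈ s, (x i + y i) ≤ ∑ i ∈ s, (2 * (x i / 2) + 2) :=
          Finset.sum_le_sum (fun i hi => by have := hy i (hs hi); omega)
      _ = 2 * (∑ i ∈ s, x i / 2) + 2 * s.card := by
          rw [Finset.sum_add_distrib, ← Finset.mul_sum, Finset.sum_const, smul_eq_mul]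
          ring
  have hsubA : ∀ s : Finset ι, s ⊆ P → ∑ i ∈ s, x i / 2 ≤ ∑ i ∈ P, x i / 2 :=
    fun s hs => Finset.sum_le_sum_of_subset hs
  have hp : p = 0 ∨ p = 1 ∨ p = 2 := by omega
  rcases hp with hp | hp | hp
  · -- p = 0
    subst hp
    by_cases hA1 : ∑ i ∈ P, x i / 2 ≤ 1
    · have := key P (le_refl _)
      omega
    · -- A' = 2
      have hA2 : ∑ i ∈ P, x i / 2 = 2 := by omega
      have hy0 : ∀ i ∈ P, 2 ≤ x i → y i = 0 := by
        intro i hi hx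
        have := h4 i hi
        simp only [hA2] at this
        by_contra hyi
        exact this ⟨hx, by omega, by omega⟩
      by_cases hall : ∀ i ∈ P, 1 ≤ x i
      · -- all pages non-empty: all x ≤ 2, two pages have x = 2 and y = 0
        have hx2 : ∀ i ∈ P, x i ≤ 2 := by
          intro i hi
          by_contra hgt
          exact h6 ⟨hall, i, hi, by omega⟩
        obtain ⟨j1, hj1P, hj1⟩ := exists_two_le (s := P) (x := x) (by omega)
        have e1 : ∑ i ∈ P, x i / 2 = x j1 / 2 + ∑ i ∈ P.erase j1, x i / 2 :=
          (Finset.add_sum_erase _ (fun i => x i / 2) hj1P).symm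
        have hxj1 : x j1 = 2 := by
          have := hx2 j1 hj1P; omega
        have e1' : ∑ i ∈ P.erase j1, x i / 2 = 1 := by omega
        obtain ⟨j2, hj2P, hj2⟩ := exists_two_le (s := P.erase j1) (x := x) (by omega)
        have hj2P' : j2 ∈ P := Finset.mem_of_mem_erase hj2P
        have hxj2 : x j2 = 2 := by
          have := hx2 j2 hj2P'; omega
        have hyj1 : y j1 = 0 := hy0 j1 hj1P (by omega)
        have hyj2 : y j2 = 0 := hy0 j2 hj2P' (by omega)
        -- peel j1 then j2
        rw [← Finset.add_sum_erase _ _ hj1P, ← Finset.add_sum_erase _ _ hj2P]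
        have hrest : ∑ i ∈ (P.erase j1).erase j2, x i / 2 = 0 := by
          have e3 : ∑ i ∈ P.erase j1, x i / 2 = x j2 / 2 + ∑ i ∈ (P.erase j1).erase j2, x i / 2 :=
            (Finset.add_sum_erase _ (fun i => x i / 2) hj2P).symm
          omega
        have hkey := key ((P.erase j1).erase j2)
          (fun i hi => Finset.mem_of_mem_erase (Finset.mem_of_mem_erase hi))
        rw [hrest] at hkey
        have hcard : (P.erase j1).erase j2 ⊆ P :=
          fun i hi => Finset.mem_of_mem_erase (Finset.mem_of_mem_erase hi)
        have hc2 : ((P.erase j1).erase j2).card + 2 ≤ P.card := by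
          rw [Finset.card_erase_of_mem hj2P, Finset.card_erase_of_mem hj1P]
          have h1 : 0 < P.card := Finset.card_pos.mpr ⟨j1, hj1P⟩
          have h2 : 0 < (P.erase j1).card := Finset.card_pos.mpr ⟨j2, hj2P⟩
          rw [Finset.card_erase_of_mem hj1P] at h2
          omega
        omega
      · -- some page with x k = 0
        push_neg at hall
        obtain ⟨k, hkP, hk⟩ := hall
        have hxk : x k = 0 := by omega
        obtain ⟨j, hjP, hj⟩ := exists_two_le (s := P) (x := x) (by omega)
        have hjk : j ≠ k := by
          intro h; rw [h] at hj; omega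
        have hjP' : j ∈ P.erase k := Finset.mem_erase.mpr ⟨hjk, hjP⟩
        have hyj : y j = 0 := hy0 j hjP (by omega)
        rw [← Finset.add_sum_erase _ _ hkP, ← Finset.add_sum_erase _ _ hjP']
        have hle1 : x j / 2 + ∑ i ∈ (P.erase k).erase j, x i / 2 ≤ 2 := by
          have e2 : ∑ i ∈ P.erase k, x i / 2 = x j / 2 + ∑ i ∈ (P.erase k).erase j, x i / 2 :=
            (Finset.add_sum_erase _ (fun i => x i / 2) hjP').symm
          have := hsubA (P.erase k) (Finset.erase_subset _ _)
          omega
        have hkey := key ((P.erase k).erase j)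
          (fun i hi => Finset.mem_of_mem_erase (Finset.mem_of_mem_erase hi))
        have hyk := hy k hkP
        have hxj : x j ≤ 2 * (x j / 2) + 1 := by omega
        have hc2 : ((P.erase k).erase j).card + 2 ≤ P.card := by
          rw [Finset.card_erase_of_mem hjP', Finset.card_erase_of_mem hkP]
          have h1 : 0 < P.card := Finset.card_pos.mpr ⟨k, hkP⟩
          have h2 : 0 < (P.erase k).card := Finset.card_pos.mpr ⟨j, hjP'⟩
          rw [Finset.card_erase_of_mem hkP] at h2
          omega
        omega
  · -- p = 1
    subst hp
    have hk : ∃ k ∈ P, x k = 0 := by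
      by_contra hc
      push_neg at hc
      exact h5 ⟨le_refl 1, fun i hi => by have := hc i hi; omega⟩
    obtain ⟨k, hkP, hxk⟩ := hk
    rw [← Finset.add_sum_erase _ _ hkP]
    have hkey := key (P.erase k) (Finset.erase_subset _ _)
    have hyk := hy k hkP
    have hAe := hsubA (P.erase k) (Finset.erase_subset _ _)
    have hc2 : (P.erase k).card + 1 ≤ P.card := by
      rw [Finset.card_erase_of_mem hkP]
      have h1 : 0 < P.card := Finset.card_pos.mpr ⟨k, hkP⟩
      omega
    omega
  · -- p = 2
    subst hp
    have hA0 : ∑ i ∈ P, x i / 2 = 0 := by omega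
    have := key P (le_refl _)
    omega
end Count
section Strategies
variable {n : ℕ}

/-- The set of page indices. -/
def P0 (n : ℕ) : Finset (Fin (n+1)) := Finset.univ.erase 0

lemma mem_P0 {i : Fin (n+1)} : i ∈ P0 n ↔ i ≠ 0 := by
  simp [P0]

lemma not_zero_mem_P0 : (0 : Fin (n+1)) ∉ P0 n := by simp [P0]

lemma card_P0 : (P0 n).card = n := by
  simp [P0, Finset.card_erase_of_mem]

lemma fin2_cases (a b : Fin 2) : a = b ∨ a = b + 1 := by revert a b; decide

def mv (c : Fin (n+1) × Fin 2 → ℕ) (z w : Fin (n+1) × Fin 2) : Fin (n+1) × Fin 2 → ℕ :=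
  fun t => if t = z then c z - 2 else if t = w then c w + 1 else c t

lemma reach_mv {c : Fin (n+1) × Fin 2 → ℕ} {z w : Fin (n+1) × Fin 2}
    (h : (bookGraph n).Adj z w) (h2 : 2 ≤ c z) : PebblingReach (bookGraph n) c (mv c z w) :=
  reach_move h h2

lemma mv_z {c : Fin (n+1) × Fin 2 → ℕ} {z w : Fin (n+1) × Fin 2} : mv c z w z = c z - 2 := by
  simp [mv]

lemma mv_w {c : Fin (n+1) × Fin 2 → ℕ} {z w : Fin (n+1) × Fin 2} (hzw : w ≠ z) :
    mv c z w w = c w + 1 := by simp [mv, hzw]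

lemma mv_t {c : Fin (n+1) × Fin 2 → ℕ} {z w t : Fin (n+1) × Fin 2} (h1 : t ≠ z) (h2 : t ≠ w) :
    mv c z w t = c t := by simp [mv, h1, h2]

/-- Result of collecting row `r` into the hub. -/
def colr (n : ℕ) (c : Fin (n+1) × Fin 2 → ℕ) (r : Fin 2) : Fin (n+1) × Fin 2 → ℕ :=
  fun t => if t = (0, r) then c (0, r) + ∑ i ∈ P0 n, c (i, r) / 2
    else if t.1 ∈ P0 n ∧ t.2 = r then c t % 2 else c t

lemma reach_colr (c : Fin (n+1) × Fin 2 → ℕ) (r : Fin 2) :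
    PebblingReach (bookGraph n) c (colr n c r) :=
  reach_collect r (P0 n) not_zero_mem_P0

lemma colr_hub {c : Fin (n+1) × Fin 2 → ℕ} {r : Fin 2} :
    colr n c r (0, r) = c (0, r) + ∑ i ∈ P0 n, c (i, r) / 2 := by simp [colr]

lemma colr_off {c : Fin (n+1) × Fin 2 → ℕ} {r : Fin 2} {t : Fin (n+1) × Fin 2}
    (ht : t.2 ≠ r) : colr n c r t = c t := by
  have h1 : t ≠ (0, r) := by rintro rfl; exact ht rfl
  simp [colr, h1, ht]

/-- Covering the spine set from pebbles on `(0,r)` and `(0,r+1)`. -/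
lemma covers_col {c : Fin (n+1) × Fin 2 → ℕ} {r : Fin 2} (h1 : 1 ≤ c (0, r))
    (h2 : 1 ≤ c (0, r+1)) : Covers c {z : Fin (n+1) × Fin 2 | z.1 = 0} := by
  rintro ⟨v1, v2⟩ hv
  simp only [Set.mem_setOf_eq] at hv
  subst hv
  have h : v2 = r ∨ v2 = r + 1 := fin2_cases v2 r
  rcases h with rfl | rfl
  · exact h1
  · exact h2

lemma covers_row {c : Fin (n+1) × Fin 2 → ℕ} {r : Fin 2} (h1 : 1 ≤ c (0, r))
    (h2 : ∀ i : Fin (n+1), i ≠ 0 → 1 ≤ c (i, r)) :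
    Covers c {z : Fin (n+1) × Fin 2 | z.2 = r} := by
  rintro ⟨v1, v2⟩ hv
  simp only [Set.mem_setOf_eq] at hv
  subst hv
  by_cases h : v1 = 0
  · subst h; exact h1
  · exact h2 v1 h
end Strategies
section Strategies2
variable {n : ℕ} {c : Fin (n+1) × Fin 2 → ℕ}

/-- The covering goal. -/
def Good (n : ℕ) (c : Fin (n+1) × Fin 2 → ℕ) : Prop :=
  ∃ c', PebblingReach (bookGraph n) c c' ∧
    ∃ U, IsStrongHubSet (bookGraph n) U ∧ Covers c' U

lemma strat_hub (c : Fin (n+1) × Fin 2 → ℕ) :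
    ∃ c₂, PebblingReach (bookGraph n) c c₂ ∧
      c₂ (0, 0) = c (0, 0) + ∑ i ∈ P0 n, c (i, 0) / 2 ∧
      c₂ (0, 1) = c (0, 1) + ∑ i ∈ P0 n, c (i, 1) / 2 := by
  refine ⟨colr n (colr n c 0) 1, reach_trans (reach_colr c 0) (reach_colr _ 1), ?_, ?_⟩
  · rw [colr_off (by show (0:Fin 2) ≠ 1; decide), colr_hub]
  · rw [colr_hub, colr_off (t := ((0 : Fin (n+1)), (1 : Fin 2))) (by show (1:Fin 2) ≠ 0; decide)]
    congr 1
    apply Finset.sum_congr rfl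
    intro i hi
    rw [colr_off (t := (i, (1 : Fin 2))) (by show (1:Fin 2) ≠ 0; decide)]

lemma good_S1 (h0 : 1 ≤ c (0, 0) + ∑ i ∈ P0 n, c (i, 0) / 2)
    (h1 : 1 ≤ c (0, 1) + ∑ i ∈ P0 n, c (i, 1) / 2) : Good n c := by
  obtain ⟨c₂, hr, e0, e1⟩ := strat_hub c
  refine ⟨c₂, hr, _, hub_col, ?_⟩
  have g0 : 1 ≤ c₂ (0, 0) := by omega
  have g1 : 1 ≤ c₂ (0, (0:Fin 2) + 1) := by
    rw [(by decide : (0:Fin 2) + 1 = 1)]; omega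
  exact covers_col g0 g1

lemma good_S2a (h : 3 ≤ c (0, 0) + ∑ i ∈ P0 n, c (i, 0) / 2) : Good n c := by
  obtain ⟨c₂, hr, e0, e1⟩ := strat_hub c
  have hadj : (bookGraph n).Adj (0, 0) (0, 1) := adj_vert2 0 (by decide)
  have h2 : 2 ≤ c₂ (0, 0) := by omega
  refine ⟨mv c₂ (0,0) (0,1), reach_trans hr (reach_mv hadj h2), _, hub_col, ?_⟩
  have g0 : 1 ≤ mv c₂ (0,0) (0,1) (0, 0) := by rw [mv_z]; omega
  have g1 : 1 ≤ mv c₂ (0,0) (0,1) (0, (0:Fin 2)+1) := by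
    rw [(by decide : (0:Fin 2) + 1 = 1), mv_w (pne2 (by decide))]; omega
  exact covers_col g0 g1

lemma good_S2b (h : 3 ≤ c (0, 1) + ∑ i ∈ P0 n, c (i, 1) / 2) : Good n c := by
  obtain ⟨c₂, hr, e0, e1⟩ := strat_hub c
  have hadj : (bookGraph n).Adj (0, 1) (0, 0) := adj_vert2 0 (by decide)
  have h2 : 2 ≤ c₂ (0, 1) := by omega
  refine ⟨mv c₂ (0,1) (0,0), reach_trans hr (reach_mv hadj h2), _, hub_col, ?_⟩
  have g0 : 1 ≤ mv c₂ (0,1) (0,0) (0, 1) := by rw [mv_z]; omega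
  have g1 : 1 ≤ mv c₂ (0,1) (0,0) (0, (1:Fin 2)+1) := by
    rw [(by decide : (1:Fin 2) + 1 = 0), mv_w (pne2 (by decide))]; omega
  exact covers_col (r := 1) g0 g1

lemma good_row_refl (r : Fin 2) (h1 : 1 ≤ c (0, r)) (h2 : ∀ i : Fin (n+1), i ≠ 0 → 1 ≤ c (i, r)) :
    Good n c :=
  ⟨c, reach_refl c, _, hub_row r, covers_row h1 h2⟩

lemma good_row_move (r : Fin 2) (k : Fin (n+1)) (hk : k ≠ 0) (h3 : 3 ≤ c (k, r))
    (h2 : ∀ i : Fin (n+1), i ≠ 0 → 1 ≤ c (i, r)) : Good n c := by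
  have hadj := adj_horiz k r hk
  refine ⟨mv c (k,r) (0,r), reach_mv hadj (by omega), _, hub_row r, covers_row ?_ ?_⟩
  · rw [mv_w (pne1 (Ne.symm hk))]; omega
  · intro i hi
    by_cases hik : i = k
    · subst hik; rw [mv_z]; omega
    · rw [mv_t (pne1 hik) (pne1 hi)]; exact h2 i hi

lemma good_S4 (r : Fin 2) (i : Fin (n+1)) (hi : i ≠ 0) (hx : 2 ≤ c (i, r))
    (hy : 1 ≤ c (i, r+1)) (hA : 2 ≤ c (0, r) + ∑ j ∈ P0 n, c (j, r) / 2) : Good n c := by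
  have hr1 : (r : Fin 2) ≠ r + 1 := (fin2_add_one_ne r).symm
  have h0i : (0 : Fin (n+1)) ≠ i := fun h => hi h.symm
  obtain ⟨c₁, step1, f1, f2, f3⟩ :
      ∃ c₁, PebblingReach (bookGraph n) c c₁ ∧ c₁ (i, r+1) = c (i, r+1) + 1 ∧
        c₁ (i, r) = c (i, r) - 2 ∧
        ∀ t, t ≠ (i, r) → t ≠ (i, r+1) → c₁ t = c t :=
    ⟨mv c (i, r) (i, r+1), reach_mv (adj_vert i r) hx,
      mv_w (pne2 (fin2_add_one_ne r)), mv_z, fun t h1 h2 => mv_t h1 h2⟩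
  obtain ⟨c₂, step2, g1, g2⟩ :
      ∃ c₂, PebblingReach (bookGraph n) c₁ c₂ ∧ c₂ (0, r+1) = c₁ (0, r+1) + 1 ∧
        ∀ t, t ≠ (i, r+1) → t ≠ (0, r+1) → c₂ t = c₁ t :=
    ⟨mv c₁ (i, r+1) (0, r+1), reach_mv (adj_horiz i (r+1) hi) (by omega),
      mv_w (pne1 h0i), fun t h1 h2 => mv_t h1 h2⟩
  set c₃ := colr n c₂ r with hc₃
  have step3 : PebblingReach (bookGraph n) c₂ c₃ := reach_colr c₂ r
  -- values
  have v2hub : c₂ (0, r) = c (0, r) := by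
    rw [g2 _ (pne1 h0i) (pne2 hr1), f3 _ (pne1 h0i) (pne1 h0i)]
  have v2i : c₂ (i, r) = c (i, r) - 2 := by
    rw [g2 _ (pne2 hr1) (pne1 hi), f2]
  have v2j : ∀ j : Fin (n+1), j ≠ 0 → j ≠ i → c₂ (j, r) = c (j, r) := by
    intro j hj0 hji
    rw [g2 _ (pne2 hr1) (pne1 hj0), f3 _ (pne1 hji) (pne2 hr1)]
  have v2hub1 : c₂ (0, r+1) = c (0, r+1) + 1 := by
    rw [g1, f3 _ (pne1 h0i) (pne1 h0i)]
  have hiP : i ∈ P0 n := mem_P0.mpr hi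
  have e3 : c₃ (0, r) = c₂ (0, r) + ∑ j ∈ P0 n, c₂ (j, r) / 2 := colr_hub
  have esum : ∑ j ∈ P0 n, c₂ (j, r) / 2 + 1 = ∑ j ∈ P0 n, c (j, r) / 2 := by
    rw [← Finset.add_sum_erase _ (fun j => c₂ (j,r) / 2) hiP,
        ← Finset.add_sum_erase _ (fun j => c (j,r) / 2) hiP]
    have hrest : ∑ j ∈ (P0 n).erase i, c₂ (j, r) / 2 = ∑ j ∈ (P0 n).erase i, c (j, r) / 2 := by
      apply Finset.sum_congr rfl
      intro j hj
      rw [v2j j (mem_P0.mp (Finset.mem_of_mem_erase hj)) (Finset.ne_of_mem_erase hj)]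
    rw [hrest, v2i]
    omega
  have g0 : 1 ≤ c₃ (0, r) := by rw [e3, v2hub]; omega
  have g1' : 1 ≤ c₃ (0, r+1) := by
    rw [hc₃, colr_off (by simpa using hr1.symm), v2hub1]
    omega
  exact ⟨c₃, reach_trans step1 (reach_trans step2 step3), _, hub_col, covers_col g0 g1'⟩
end Strategies2
/-- For `n ≥ 2`, the strong hub cover pebbling number of the book `B_n` is `2n + 3`. -/
theorem stmt14 (n : ℕ) (hn : 2 ≤ n) :
    IsLeast {t : ℕ | ∀ c : Fin (n + 1) × Fin 2 → ℕ, (∑ v, c v) = t →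
        ∃ c', PebblingReach (bookGraph n) c c' ∧
          ∃ U, IsStrongHubSet (bookGraph n) U ∧ Covers c' U}
      (2 * n + 3) := by
  constructor
  · -- 2n+3 pebbles always suffice
    intro c hsum
    suffices hg : Good n c by exact hg
    have hsum' : c (0,0) + c (0,1) + ∑ i ∈ P0 n, (c (i,0) + c (i,1)) = 2*n+3 := by
      rw [Fintype.sum_prod_type] at hsum
      rw [Finset.sum_congr rfl (fun i _ => Fin.sum_univ_two (fun r => c (i, r)))] at hsum
      rw [← Finset.add_sum_erase _ _ (Finset.mem_univ (0 : Fin (n+1)))] at hsum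
      rw [show Finset.univ.erase (0:Fin (n+1)) = P0 n from rfl] at hsum
      omega
    by_cases h1 : (1 ≤ c (0,0) + ∑ i ∈ P0 n, c (i,0) / 2) ∧
        (1 ≤ c (0,1) + ∑ i ∈ P0 n, c (i,1) / 2)
    · exact good_S1 h1.1 h1.2
    by_cases h2 : 3 ≤ c (0,0) + ∑ i ∈ P0 n, c (i,0) / 2
    · exact good_S2a h2
    by_cases h3 : 3 ≤ c (0,1) + ∑ i ∈ P0 n, c (i,1) / 2
    · exact good_S2b h3
    have hr : ∃ r : Fin 2, c (0,r+1) + ∑ i ∈ P0 n, c (i,r+1) / 2 = 0 ∧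
        c (0,r) + ∑ i ∈ P0 n, c (i,r) / 2 ≤ 2 := by
      by_cases hA1 : c (0,1) + ∑ i ∈ P0 n, c (i,1) / 2 = 0
      · refine ⟨0, ?_, ?_⟩
        · rw [(by decide : (0:Fin 2) + 1 = 1)]; exact hA1
        · omega
      · refine ⟨1, ?_, ?_⟩
        · rw [(by decide : (1:Fin 2) + 1 = 0)]
          omega
        · omega
    obtain ⟨r, hB0, hA2⟩ := hr
    by_cases h4 : ∃ i ∈ P0 n, 2 ≤ c (i,r) ∧ 1 ≤ c (i,r+1) ∧
        2 ≤ c (0,r) + ∑ j ∈ P0 n, c (j,r) / 2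
    · obtain ⟨i, hiP, hx, hy, hA⟩ := h4
      exact good_S4 r i (mem_P0.mp hiP) hx hy hA
    by_cases h5 : 1 ≤ c (0,r) ∧ ∀ i ∈ P0 n, 1 ≤ c (i,r)
    · exact good_row_refl r h5.1 (fun i hi => h5.2 i (mem_P0.mpr hi))
    by_cases h6 : (∀ i ∈ P0 n, 1 ≤ c (i,r)) ∧ ∃ k ∈ P0 n, 3 ≤ c (k,r)
    · obtain ⟨hall, k, hkP, hk3⟩ := h6
      exact good_row_move r k (mem_P0.mp hkP) hk3 (fun i hi => hall i (mem_P0.mpr hi))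
    exfalso
    have hcount := count_lemma (P0 n) (c (0,r)) (c (0,r+1))
      (fun i => c (i,r)) (fun i => c (i,r+1)) hB0 hA2
      (fun i hi hcon => h4 ⟨i, hi, hcon⟩) h5 h6
    rw [card_P0] at hcount
    have hrr : r = 0 ∨ r = 1 := by omega
    rcases hrr with rfl | rfl
    · rw [(by decide : (0:Fin 2) + 1 = 1)] at hcount
      omega
    · rw [(by decide : (1:Fin 2) + 1 = 0)] at hcount
      have hswap : ∑ i ∈ P0 n, (c (i,1) + c (i,0)) = ∑ i ∈ P0 n, (c (i,0) + c (i,1)) :=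
        Finset.sum_congr rfl (fun i _ => Nat.add_comm _ _)
      omega
  · -- 2n+2 pebbles do not suffice
    intro t ht
    by_contra hlt
    push_neg at hlt
    obtain ⟨c, hcF, hct⟩ := sub_config (Fbad n) t (by rw [sum_Fbad hn]; omega)
    obtain ⟨c', hreach, U, hU, hcov⟩ := ht c hct
    have k1 : K3 n c' ≤ K3 n c := K3_reach hreach
    have k2 : K3 n c ≤ K3 n (Fbad n) := K3_mono hcF
    have k3 := K3_Fbad (n := n) hn
    have k4 := covers_K3 hn hU hcov
    omega
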